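/- arXiv:2112.09899 — 4 statements merged into one kernel-verified Lean document; each statement's English description precedes it below -/
import Mathlib

section
/- Let G, Y, G_n, G_sub be random variables on a probability space taking values in nonempty finite types. Assume (i) G_n is independent of Y, and (ii) the pair (Y, G_n) is conditionally independent of G_sub given G (i.e., G_n and Y influence G_sub only through G). Then I[G_sub : G_n] ≤ I[G_sub : G] − I[G_sub : Y]. (Paper's Lemma 1.) -/
/-!
Write `W = (Y, G_n)`. Independence of `Y` and `G_n` makes mutual information superadditive,
`I[G_sub : Y] + I[G_sub : G_n] ≤ I[G_sub : W]`, and since `W` and `G_sub` are conditionally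
independent given `G`, data processing gives `I[G_sub : W] ≤ I[G_sub : G]`. Both come from the
submodularity of entropy, `H[Z] + H[Z, X, Y] ≤ H[Z, X] + H[Z, Y]`, with equality when `X` and `Y`
are conditionally independent given `Z`. Submodularity is Gibbs' inequality comparing the law
`p(z, x, y)` of `(Z, X, Y)` with `p(z, x) p(z, y) / p(z)`; in the equality case the two laws agree.
-/

open MeasureTheory ProbabilityTheory Real

/-- Shannon entropy (in nats) of a random variable `X` taking values in a finite type,
computed with respect to the measure `μ`: `H[X] = ∑ s, -p s * log (p s)` where
`p s = μ (X ⁻¹' {s})`. -/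
noncomputable def entropy {Ω S : Type*} [MeasurableSpace Ω] [Fintype S]
    (μ : Measure Ω) (X : Ω → S) : ℝ :=
  ∑ s : S, Real.negMulLog ((μ (X ⁻¹' {s})).toReal)

/-- Mutual information `I[X : Y] = H[X] + H[Y] - H[⟨X, Y⟩]`. -/
noncomputable def mutualInfo {Ω S T : Type*} [MeasurableSpace Ω] [Fintype S] [Fintype T]
    (μ : Measure Ω) (X : Ω → S) (Y : Ω → T) : ℝ :=
  entropy μ X + entropy μ Y - entropy μ (fun ω => (X ω, Y ω))

lemma sum_mul_log_le_sum_mul_log {ι : Type*} (s : Finset ι) {p q : ι → ℝ}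
    (hp : ∀ i ∈ s, 0 ≤ p i) (hq : ∀ i ∈ s, 0 ≤ q i) (hpq : ∀ i ∈ s, q i = 0 → p i = 0)
    (hsum : ∑ i ∈ s, q i ≤ ∑ i ∈ s, p i) :
    ∑ i ∈ s, p i * log (q i) ≤ ∑ i ∈ s, p i * log (p i) := by
  suffices ∑ i ∈ s, (p i * log (q i) - p i * log (p i)) ≤ ∑ i ∈ s, (q i - p i) by
    rw [Finset.sum_sub_distrib, Finset.sum_sub_distrib] at this
    linarith
  refine Finset.sum_le_sum fun i hi => ?_
  rcases (hp i hi).eq_or_lt with hp0 | hp0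
  · simp [← hp0, hq i hi]
  have hq0 : 0 < q i := (hq i hi).lt_of_ne fun h => hp0.ne' (hpq i hi h.symm)
  calc p i * log (q i) - p i * log (p i) = p i * log (q i / p i) := by
        rw [log_div hq0.ne' hp0.ne']; ring
    _ ≤ p i * (q i / p i - 1) := by gcongr; exact log_le_sub_one_of_pos (div_pos hq0 hp0)
    _ = q i - p i := by field_simp

lemma preimage_prodMk_singleton {Ω S T : Type*} (X : Ω → S) (Y : Ω → T) (x : S) (y : T) :
    (fun ω => (X ω, Y ω)) ⁻¹' {(x, y)} = X ⁻¹' {x} ∩ Y ⁻¹' {y} := by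
  rw [← Set.singleton_prod_singleton, Set.mk_preimage_prod]

section Entropy

variable {Ω S T : Type*} [MeasurableSpace Ω] {μ : Measure Ω}

lemma measureReal_preimage_singleton_le_comp [IsFiniteMeasure μ] {X : Ω → S} (f : S → T)
    (s : S) : μ.real (X ⁻¹' {s}) ≤ μ.real ((f ∘ X) ⁻¹' {f s}) :=
  measureReal_mono fun ω (hω : X ω = s) => congrArg f hω

variable [Fintype S]

lemma entropy_eq_neg_sum_mul_log (X : Ω → S) :
    entropy μ X = -∑ s, μ.real (X ⁻¹' {s}) * log (μ.real (X ⁻¹' {s})) := by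
  simp only [entropy, negMulLog, measureReal_def, neg_mul, Finset.sum_neg_distrib]

lemma sum_measureReal_inter_preimage_singleton [IsFiniteMeasure μ] [MeasurableSpace S]
    [MeasurableSingletonClass S] {X : Ω → S} (hX : Measurable X) (A : Set Ω) :
    ∑ x, μ.real (A ∩ X ⁻¹' {x}) = μ.real A := by
  have := sum_measureReal_preimage_singleton (μ := μ.restrict A) Finset.univ
    (fun x _ => hX (measurableSet_singleton x))
  simpa [measureReal_restrict_apply (hX (measurableSet_singleton _)), Set.inter_comm] using this

variable [Fintype T]

lemma entropy_comp_of_injective (X : Ω → S) {f : S → T} (hf : f.Injective) :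
    entropy μ (f ∘ X) = entropy μ X := by
  refine (Fintype.sum_of_injective f hf _ _ (fun t ht => ?_) fun s => ?_).symm
  · rw [Set.preimage_comp, Set.preimage_singleton_eq_empty.2 ht]
    simp
  · rw [Set.preimage_comp, ← Set.image_singleton, hf.preimage_image]

lemma entropy_prod_comm (X : Ω → S) (Y : Ω → T) :
    entropy μ (fun ω => (X ω, Y ω)) = entropy μ (fun ω => (Y ω, X ω)) := by
  rw [← entropy_comp_of_injective (fun ω => (Y ω, X ω)) Prod.swap_injective]
  rfl

variable [IsFiniteMeasure μ] [MeasurableSpace S] [MeasurableSingletonClass S]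

lemma sum_measureReal_preimage_mul_comp {X : Ω → S} (hX : Measurable X) (f : S → T)
    (φ : T → ℝ) :
    ∑ s, μ.real (X ⁻¹' {s}) * φ (f s) = ∑ t, μ.real ((f ∘ X) ⁻¹' {t}) * φ t := by
  classical
  have hfiber : ∀ s t, X ⁻¹' {s} ∩ (f ∘ X) ⁻¹' {t} = if f s = t then X ⁻¹' {s} else ∅ := by
    intro s t
    split_ifs with h
    · exact Set.inter_eq_left.2 fun ω hω => by simp_all
    · refine Set.eq_empty_of_forall_notMem fun ω ⟨hs, ht⟩ => h ?_
      simp only [Set.mem_preimage, Set.mem_singleton_iff, Function.comp_apply] at hs ht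
      rwa [← hs]
  simp_rw [← sum_measureReal_inter_preimage_singleton hX ((f ∘ X) ⁻¹' {_}), Finset.sum_mul]
  rw [Finset.sum_comm]
  simp_rw [Set.inter_comm _ (X ⁻¹' {_}), hfiber, apply_ite μ.real, measureReal_empty, ite_mul,
    zero_mul, Finset.sum_ite_eq, Finset.mem_univ, if_true]

lemma sum_measureReal_mul_log_comp {X : Ω → S} (hX : Measurable X) (f : S → T) :
    ∑ s, μ.real (X ⁻¹' {s}) * log (μ.real ((f ∘ X) ⁻¹' {f s})) = -entropy μ (f ∘ X) := by
  rw [sum_measureReal_preimage_mul_comp hX f fun t => log (μ.real ((f ∘ X) ⁻¹' {t})),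
    entropy_eq_neg_sum_mul_log, neg_neg]

lemma entropy_prod_eq_add_of_indepFun [IsProbabilityMeasure μ] [MeasurableSpace T]
    [MeasurableSingletonClass T] {X : Ω → S} {Y : Ω → T} (hX : Measurable X)
    (hY : Measurable Y) (h : IndepFun X Y μ) :
    entropy μ (fun ω => (X ω, Y ω)) = entropy μ X + entropy μ Y := by
  have hfac : ∀ x y, μ.real ((fun ω => (X ω, Y ω)) ⁻¹' {(x, y)})
      = μ.real (X ⁻¹' {x}) * μ.real (Y ⁻¹' {y}) := fun x y => by
    rw [preimage_prodMk_singleton, measureReal_def,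
      h.measure_inter_preimage_eq_mul _ _ (measurableSet_singleton x) (measurableSet_singleton y),
      ENNReal.toReal_mul, measureReal_def, measureReal_def]
  have hX1 : ∑ x, μ.real (X ⁻¹' {x}) = 1 := by
    simpa using sum_measureReal_inter_preimage_singleton (μ := μ) hX Set.univ
  have hY1 : ∑ y, μ.real (Y ⁻¹' {y}) = 1 := by
    simpa using sum_measureReal_inter_preimage_singleton (μ := μ) hY Set.univ
  simp only [entropy, ← measureReal_def, Fintype.sum_prod_type, hfac, negMulLog_mul,
    Finset.sum_add_distrib, ← Finset.sum_mul, ← Finset.mul_sum, hY1, one_mul, hX1]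

end Entropy

section Submodularity

variable {Ω S T U : Type*} [MeasurableSpace Ω] {μ : Measure Ω} {Z : Ω → U} {X : Ω → S}
  {Y : Ω → T}

/-- A law on triples `(z, x, y)` with the same pair laws of `(Z, X)` and `(Z, Y)` as `(Z, X, Y)`,
under which `X` and `Y` are conditionally independent given `Z`. -/
noncomputable def condIndepCoupling (μ : Measure Ω) (Z : Ω → U) (X : Ω → S) (Y : Ω → T)
    (v : U × S × T) : ℝ :=
  μ.real ((fun ω => (Z ω, X ω)) ⁻¹' {(v.1, v.2.1)})
    * μ.real ((fun ω => (Z ω, Y ω)) ⁻¹' {(v.1, v.2.2)}) / μ.real (Z ⁻¹' {v.1})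

lemma condIndepCoupling_nonneg (v : U × S × T) : 0 ≤ condIndepCoupling μ Z X Y v := by
  unfold condIndepCoupling; positivity

variable [IsFiniteMeasure μ]

lemma measureReal_eq_zero_of_condIndepCoupling_eq_zero {v : U × S × T}
    (hv : condIndepCoupling μ Z X Y v = 0) :
    μ.real ((fun ω => (Z ω, X ω, Y ω)) ⁻¹' {v}) = 0 := by
  have hZX : μ.real ((fun ω => (Z ω, X ω, Y ω)) ⁻¹' {v})
      ≤ μ.real ((fun ω => (Z ω, X ω)) ⁻¹' {(v.1, v.2.1)}) :=
    measureReal_preimage_singleton_le_comp (fun v : U × S × T => (v.1, v.2.1)) v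
  have hZY : μ.real ((fun ω => (Z ω, X ω, Y ω)) ⁻¹' {v})
      ≤ μ.real ((fun ω => (Z ω, Y ω)) ⁻¹' {(v.1, v.2.2)}) :=
    measureReal_preimage_singleton_le_comp (fun v : U × S × T => (v.1, v.2.2)) v
  have hZ : μ.real ((fun ω => (Z ω, X ω, Y ω)) ⁻¹' {v}) ≤ μ.real (Z ⁻¹' {v.1}) :=
    measureReal_preimage_singleton_le_comp Prod.fst v
  simp only [condIndepCoupling, div_eq_zero_iff, mul_eq_zero] at hv
  rcases hv with (h | h) | h
  · exact le_antisymm (h ▸ hZX) measureReal_nonneg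
  · exact le_antisymm (h ▸ hZY) measureReal_nonneg
  · exact le_antisymm (h ▸ hZ) measureReal_nonneg

variable [Fintype S] [MeasurableSpace S] [MeasurableSingletonClass S]

lemma sum_measureReal_preimage_prodMk_singleton (hX : Measurable X) (z : U) :
    ∑ x, μ.real ((fun ω => (Z ω, X ω)) ⁻¹' {(z, x)}) = μ.real (Z ⁻¹' {z}) := by
  simp_rw [preimage_prodMk_singleton]
  exact sum_measureReal_inter_preimage_singleton hX _

variable [Fintype T] [MeasurableSpace T] [MeasurableSingletonClass T]
  [Fintype U] [MeasurableSpace U] [MeasurableSingletonClass U]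

lemma sum_condIndepCoupling (hZ : Measurable Z) (hX : Measurable X) (hY : Measurable Y) :
    ∑ v, condIndepCoupling μ Z X Y v = μ.real Set.univ := by
  simp only [condIndepCoupling, Fintype.sum_prod_type]
  simp_rw [← Finset.sum_div, ← Finset.mul_sum, ← Finset.sum_mul,
    sum_measureReal_preimage_prodMk_singleton hX, sum_measureReal_preimage_prodMk_singleton hY,
    mul_self_div_self]
  simpa using sum_measureReal_inter_preimage_singleton (μ := μ) hZ Set.univ

lemma sum_measureReal_mul_log_condIndepCoupling (hZ : Measurable Z) (hX : Measurable X)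
    (hY : Measurable Y) :
    ∑ v, μ.real ((fun ω => (Z ω, X ω, Y ω)) ⁻¹' {v}) * log (condIndepCoupling μ Z X Y v)
      = entropy μ Z - entropy μ (fun ω => (Z ω, X ω)) - entropy μ (fun ω => (Z ω, Y ω)) := by
  set V := fun ω => (Z ω, X ω, Y ω)
  have hV : Measurable V := hZ.prodMk (hX.prodMk hY)
  have hZX : ∑ v, μ.real (V ⁻¹' {v}) * log (μ.real ((fun ω => (Z ω, X ω)) ⁻¹' {(v.1, v.2.1)}))
      = -entropy μ (fun ω => (Z ω, X ω)) :=
    sum_measureReal_mul_log_comp hV fun v => (v.1, v.2.1)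
  have hZY : ∑ v, μ.real (V ⁻¹' {v}) * log (μ.real ((fun ω => (Z ω, Y ω)) ⁻¹' {(v.1, v.2.2)}))
      = -entropy μ (fun ω => (Z ω, Y ω)) :=
    sum_measureReal_mul_log_comp hV fun v => (v.1, v.2.2)
  have hZ : ∑ v, μ.real (V ⁻¹' {v}) * log (μ.real (Z ⁻¹' {v.1})) = -entropy μ Z :=
    sum_measureReal_mul_log_comp hV Prod.fst
  have hterm : ∀ v, μ.real (V ⁻¹' {v}) * log (condIndepCoupling μ Z X Y v)
      = μ.real (V ⁻¹' {v}) * log (μ.real ((fun ω => (Z ω, X ω)) ⁻¹' {(v.1, v.2.1)}))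
        + μ.real (V ⁻¹' {v}) * log (μ.real ((fun ω => (Z ω, Y ω)) ⁻¹' {(v.1, v.2.2)}))
        - μ.real (V ⁻¹' {v}) * log (μ.real (Z ⁻¹' {v.1})) := by
    intro v
    by_cases hv : condIndepCoupling μ Z X Y v = 0
    · simp [measureReal_eq_zero_of_condIndepCoupling_eq_zero hv, V]
    have hv' := hv
    simp only [condIndepCoupling, div_eq_zero_iff, mul_eq_zero, not_or] at hv'
    obtain ⟨⟨hZX0, hZY0⟩, hZ0⟩ := hv'
    rw [condIndepCoupling, log_div (mul_ne_zero hZX0 hZY0) hZ0, log_mul hZX0 hZY0]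
    ring
  rw [Finset.sum_congr rfl fun v _ => hterm v, Finset.sum_sub_distrib, Finset.sum_add_distrib,
    hZX, hZY, hZ]
  ring

theorem entropy_submodular (hZ : Measurable Z) (hX : Measurable X) (hY : Measurable Y) :
    entropy μ Z + entropy μ (fun ω => (Z ω, X ω, Y ω))
      ≤ entropy μ (fun ω => (Z ω, X ω)) + entropy μ (fun ω => (Z ω, Y ω)) := by
  have hV : Measurable fun ω => (Z ω, X ω, Y ω) := hZ.prodMk (hX.prodMk hY)
  have hgibbs := sum_mul_log_le_sum_mul_log Finset.univ
    (p := fun v => μ.real ((fun ω => (Z ω, X ω, Y ω)) ⁻¹' {v}))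
    (fun v _ => measureReal_nonneg) (fun v _ => condIndepCoupling_nonneg v)
    (fun v _ => measureReal_eq_zero_of_condIndepCoupling_eq_zero)
    (by
      rw [sum_condIndepCoupling hZ hX hY]
      simpa using (sum_measureReal_inter_preimage_singleton hV Set.univ).ge)
  rw [sum_measureReal_mul_log_condIndepCoupling hZ hX hY] at hgibbs
  linarith [entropy_eq_neg_sum_mul_log (μ := μ) fun ω => (Z ω, X ω, Y ω)]

theorem entropy_submodular_eq (hZ : Measurable Z) (hX : Measurable X) (hY : Measurable Y)
    (h : ∀ v, μ.real ((fun ω => (Z ω, X ω, Y ω)) ⁻¹' {v}) = condIndepCoupling μ Z X Y v) :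
    entropy μ Z + entropy μ (fun ω => (Z ω, X ω, Y ω))
      = entropy μ (fun ω => (Z ω, X ω)) + entropy μ (fun ω => (Z ω, Y ω)) := by
  have hlog := sum_measureReal_mul_log_condIndepCoupling (μ := μ) hZ hX hY
  simp_rw [← h] at hlog
  linarith [entropy_eq_neg_sum_mul_log (μ := μ) fun ω => (Z ω, X ω, Y ω)]

end Submodularity

section CondExp

variable {Ω U : Type*} [MeasurableSpace Ω] {μ : Measure Ω}
  [MeasurableSpace U] [MeasurableSingletonClass U] {Z : Ω → U}

lemma setIntegral_fiber_eq_mul (hZ : Measurable Z) {g : Ω → ℝ}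
    (hg : StronglyMeasurable[MeasurableSpace.comap Z inferInstance] g) (ω₀ : Ω) :
    ∫ ω in Z ⁻¹' {Z ω₀}, g ω ∂μ = μ.real (Z ⁻¹' {Z ω₀}) * g ω₀ := by
  rw [setIntegral_congr_fun (hZ (measurableSet_singleton _)) fun ω hω => hg.factorsThrough hω,
    setIntegral_const, smul_eq_mul]

variable [IsFiniteMeasure μ]

lemma setIntegral_fiber_condExp_indicator (hZ : Measurable Z) {s : Set Ω} (hs : MeasurableSet s)
    (z : U) :
    ∫ ω in Z ⁻¹' {z}, (μ⟦s | MeasurableSpace.comap Z inferInstance⟧) ω ∂μ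
      = μ.real (Z ⁻¹' {z} ∩ s) := by
  rw [setIntegral_condExp hZ.comap_le ((integrable_const 1).indicator hs)
    ⟨{z}, measurableSet_singleton z, rfl⟩, setIntegral_indicator hs, setIntegral_const,
    smul_eq_mul, mul_one]

lemma measureReal_fiber_inter_mul_eq (hZ : Measurable Z) {s t : Set Ω}
    (hs : MeasurableSet s) (ht : MeasurableSet t)
    (h : μ⟦s ∩ t | MeasurableSpace.comap Z inferInstance⟧ =ᵐ[μ]
      fun ω => (μ⟦s | MeasurableSpace.comap Z inferInstance⟧) ω
        * (μ⟦t | MeasurableSpace.comap Z inferInstance⟧) ω) (z : U) :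
    μ.real (Z ⁻¹' {z} ∩ (s ∩ t)) * μ.real (Z ⁻¹' {z})
      = μ.real (Z ⁻¹' {z} ∩ s) * μ.real (Z ⁻¹' {z} ∩ t) := by
  by_cases hz : ∃ ω₀, Z ω₀ = z
  swap
  · simp [Set.preimage_singleton_eq_empty.2 hz]
  obtain ⟨ω₀, rfl⟩ := hz
  simp only [← setIntegral_fiber_condExp_indicator hZ (hs.inter ht),
    ← setIntegral_fiber_condExp_indicator hZ hs, ← setIntegral_fiber_condExp_indicator hZ ht,
    setIntegral_congr_ae (hZ (measurableSet_singleton _)) (h.mono fun ω hω _ => hω)]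
  have hmul : StronglyMeasurable[MeasurableSpace.comap Z inferInstance] fun ω =>
      (μ⟦s | MeasurableSpace.comap Z inferInstance⟧) ω
        * (μ⟦t | MeasurableSpace.comap Z inferInstance⟧) ω :=
    stronglyMeasurable_condExp.mul stronglyMeasurable_condExp
  rw [setIntegral_fiber_eq_mul hZ hmul, setIntegral_fiber_eq_mul hZ stronglyMeasurable_condExp,
    setIntegral_fiber_eq_mul hZ stronglyMeasurable_condExp]
  ring

lemma measureReal_preimage_eq_condIndepCoupling_of_condIndepFun [StandardBorelSpace Ω]
    {S T : Type*} [MeasurableSpace S] [MeasurableSingletonClass S] [MeasurableSpace T]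
    [MeasurableSingletonClass T] {X : Ω → S} {Y : Ω → T} (hZ : Measurable Z) (hX : Measurable X) (hY : Measurable Y)
    (h : CondIndepFun (MeasurableSpace.comap Z inferInstance) hZ.comap_le X Y μ)
    (v : U × S × T) :
    μ.real ((fun ω => (Z ω, X ω, Y ω)) ⁻¹' {v}) = condIndepCoupling μ Z X Y v := by
  obtain ⟨z, x, y⟩ := v
  have hfac := measureReal_fiber_inter_mul_eq hZ (hX (measurableSet_singleton x))
    (hY (measurableSet_singleton y)) ((condIndepFun_iff_condExp_inter_preimage_eq_mul hX hY).1 h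
      _ _ (measurableSet_singleton x) (measurableSet_singleton y)) z
  simp only [condIndepCoupling, preimage_prodMk_singleton]
  rcases (measureReal_nonneg (μ := μ) (s := Z ⁻¹' {z})).eq_or_lt with hz | hz
  · rw [← hz, div_zero]
    exact le_antisymm (hz ▸ measureReal_mono Set.inter_subset_left) measureReal_nonneg
  · rw [eq_div_iff hz.ne']
    exact hfac

end CondExp

section Information

variable {Ω S T U : Type*} [MeasurableSpace Ω] {μ : Measure Ω}
  [Fintype S] [MeasurableSpace S] [MeasurableSingletonClass S]
  [Fintype T] [MeasurableSpace T] [MeasurableSingletonClass T]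
  [Fintype U] [MeasurableSpace U] [MeasurableSingletonClass U]
  {X : Ω → S} {Y : Ω → T} {Z : Ω → U}

theorem mutualInfo_add_mutualInfo_le_of_indepFun [IsProbabilityMeasure μ] (hX : Measurable X)
    (hY : Measurable Y) (hZ : Measurable Z) (h : IndepFun Y Z μ) :
    mutualInfo μ X Y + mutualInfo μ X Z ≤ mutualInfo μ X (fun ω => (Y ω, Z ω)) := by
  have hsub := entropy_submodular (μ := μ) hX hY hZ
  have hYZ := entropy_prod_eq_add_of_indepFun hY hZ h
  simp only [mutualInfo]
  linarith

theorem mutualInfo_le_mutualInfo_of_condIndepFun [StandardBorelSpace Ω] [IsFiniteMeasure μ]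
    (hX : Measurable X) (hY : Measurable Y) (hZ : Measurable Z)
    (h : CondIndepFun (MeasurableSpace.comap Y inferInstance) hY.comap_le Z X μ) :
    mutualInfo μ X Z ≤ mutualInfo μ X Y := by
  have hsub := entropy_submodular (μ := μ) hZ hY hX
  have heq := entropy_submodular_eq hY hZ hX
    (measureReal_preimage_eq_condIndepCoupling_of_condIndepFun hY hZ hX h)
  have hswap : entropy μ (fun ω => (Z ω, Y ω, X ω)) = entropy μ (fun ω => (Y ω, Z ω, X ω)) := by
    rw [← entropy_comp_of_injective (fun ω => (Y ω, Z ω, X ω)) (f := fun v => (v.2.1, v.1, v.2.2))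
      fun a b hab => by simp_all [Prod.ext_iff]]
    rfl
  simp only [mutualInfo]
  linarith [entropy_prod_comm (μ := μ) Z Y, entropy_prod_comm (μ := μ) Z X,
    entropy_prod_comm (μ := μ) Y X]

end Information

theorem lemma1_subgraph_info_bound_general
    {Ω : Type*} [MeasurableSpace Ω] [StandardBorelSpace Ω]
    (μ : Measure Ω) [IsProbabilityMeasure μ]
    {SG SY Sn Ssub : Type*}
    [Fintype SG] [MeasurableSpace SG] [DiscreteMeasurableSpace SG]
    [Fintype SY] [MeasurableSpace SY] [DiscreteMeasurableSpace SY]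
    [Fintype Sn] [MeasurableSpace Sn] [DiscreteMeasurableSpace Sn]
    [Fintype Ssub] [MeasurableSpace Ssub] [DiscreteMeasurableSpace Ssub]
    (G : Ω → SG) (Y : Ω → SY) (Gn : Ω → Sn) (Gsub : Ω → Ssub)
    (hG : Measurable G) (hY : Measurable Y) (hGn : Measurable Gn) (hGsub : Measurable Gsub)
    (hindep : IndepFun Gn Y μ)
    (hcond : CondIndepFun (MeasurableSpace.comap G inferInstance) hG.comap_le
      (fun ω => (Y ω, Gn ω)) Gsub μ) :
    mutualInfo μ Gsub Gn ≤ mutualInfo μ Gsub G - mutualInfo μ Gsub Y := by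
  have hsuperadd := mutualInfo_add_mutualInfo_le_of_indepFun hGsub hY hGn hindep.symm
  have hprocessing := mutualInfo_le_mutualInfo_of_condIndepFun hGsub hG (hY.prodMk hGn) hcond
  linarith

/-- Paper's Lemma 1: if `G_n ⟂ Y` and `(Y, G_n) ⟂ G_sub | G`, then
`I[G_sub : G_n] ≤ I[G_sub : G] - I[G_sub : Y]`. -/
theorem lemma1_subgraph_info_bound
    {Ω : Type*} [MeasurableSpace Ω] [StandardBorelSpace Ω] [Nonempty Ω]
    (μ : Measure Ω) [IsProbabilityMeasure μ]
    {SG SY Sn Ssub : Type*}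
    [Fintype SG] [Nonempty SG] [MeasurableSpace SG] [DiscreteMeasurableSpace SG]
    [Fintype SY] [Nonempty SY] [MeasurableSpace SY] [DiscreteMeasurableSpace SY]
    [Fintype Sn] [Nonempty Sn] [MeasurableSpace Sn] [DiscreteMeasurableSpace Sn]
    [Fintype Ssub] [Nonempty Ssub] [MeasurableSpace Ssub] [DiscreteMeasurableSpace Ssub]
    (G : Ω → SG) (Y : Ω → SY) (Gn : Ω → Sn) (Gsub : Ω → Ssub)
    (hG : Measurable G) (hY : Measurable Y) (hGn : Measurable Gn) (hGsub : Measurable Gsub)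
    (hindep : IndepFun Gn Y μ)
    (hcond : CondIndepFun (MeasurableSpace.comap G inferInstance) hG.comap_le
      (fun ω => (Y ω, Gn ω)) Gsub μ) :
    mutualInfo μ Gsub Gn ≤ mutualInfo μ Gsub G - mutualInfo μ Gsub Y :=
  lemma1_subgraph_info_bound_general μ G Y Gn Gsub hG hY hGn hGsub hindep hcond
end

section
/- Let X, Y be random variables on a probability space (Ω, ℱ, ℙ) taking values in nonempty finite types α and β, and let q : α → β → ℝ satisfy q a b > 0 and ∑_{b : β} q a b = 1 for every a. Then H[Y|X] ≤ 𝔼_ℙ[−log q (X ω) (Y ω)], and consequently −I[X : Y] ≤ 𝔼_ℙ[−log q (X ω) (Y ω)]. (The variational upper bound, Eq. 9 of the paper: the negative mutual information −I(G_N, Y) is bounded by the expected cross-entropy loss of any variational classifier q(Y|G_N).) -/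
open MeasureTheory ProbabilityTheory Real

/-- Conditional entropy `H[Y|X] = H[⟨X, Y⟩] - H[X]`. -/
noncomputable def condEntropy {Ω S T : Type*} [MeasurableSpace Ω] [Fintype S] [Fintype T]
    (μ : Measure Ω) (X : Ω → S) (Y : Ω → T) : ℝ :=
  entropy μ (fun ω => (X ω, Y ω)) - entropy μ X

/-!
Let `p` be the joint law of `(X, Y)` and `p_X` its first marginal. Then
`r (a, b) = p_X a * q a b` is again a probability vector on `α × β`, so Gibbs' inequality
`∑ p log (r / p) ≤ ∑ r - ∑ p = 0` reads `H[X, Y] ≤ H[X] + 𝔼[-log q (X, Y)]`, which is the first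
bound. The second follows from `-I[X : Y] = H[Y|X] - H[Y]` and `H[Y] ≥ 0`.
-/

namespace Real

lemma negMulLog_add_mul_log_le_sub {x r : ℝ} (hx : 0 ≤ x) (hr : 0 < r) :
    negMulLog x + x * log r ≤ r - x := by
  rcases hx.eq_or_lt with rfl | hx
  · simpa using hr.le
  have hlog := mul_le_mul_of_nonneg_left (log_le_sub_one_of_pos (div_pos hr hx)) hx.le
  rw [log_div hr.ne' hx.ne', mul_sub_one, mul_div_cancel₀ r hx.ne'] at hlog
  rw [negMulLog]
  linarith

/-- Dominating `x` by `y` settles the case `y = 0`, where `log (y * c) ≠ log y + log c`: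
then `x = 0` as well. -/
lemma negMulLog_add_mul_log_add_log_le {x y c : ℝ} (hx : 0 ≤ x) (hxy : x ≤ y) (hc : 0 < c) :
    negMulLog x + x * (log y + log c) ≤ y * c - x := by
  rcases hx.eq_or_lt with rfl | hx
  · simpa using mul_nonneg hxy hc.le
  have hy : 0 < y := hx.trans_le hxy
  rw [← log_mul hy.ne' hc.ne']
  exact negMulLog_add_mul_log_le_sub hx.le (mul_pos hy hc)

end Real

section FiniteRandomVariable

variable {Ω S T : Type*} [MeasurableSpace Ω] {μ : Measure Ω}

lemma entropy_nonneg [IsZeroOrProbabilityMeasure μ] [Fintype S] (X : Ω → S) :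
    0 ≤ entropy μ X :=
  Finset.sum_nonneg fun _ _ ↦
    Real.negMulLog_nonneg ENNReal.toReal_nonneg (measureReal_le_one (μ := μ))

lemma sum_measureReal_preimage_singleton_eq_one [IsProbabilityMeasure μ]
    [Fintype S] [MeasurableSpace S] [MeasurableSingletonClass S] {X : Ω → S}
    (hX : Measurable X) : ∑ s, μ.real (X ⁻¹' {s}) = 1 := by
  rw [sum_measureReal_preimage_singleton _ fun s _ ↦ hX (measurableSet_singleton s),
    Finset.coe_univ, Set.preimage_univ, probReal_univ]

lemma measureReal_preimage_singleton_eq_sum_prod [IsFiniteMeasure μ]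
    [MeasurableSpace S] [MeasurableSingletonClass S]
    [Fintype T] [MeasurableSpace T] [MeasurableSingletonClass T] {X : Ω → S} {Y : Ω → T}
    (hXY : Measurable fun ω ↦ (X ω, Y ω)) (a : S) :
    μ.real (X ⁻¹' {a}) = ∑ b, μ.real ((fun ω ↦ (X ω, Y ω)) ⁻¹' {(a, b)}) := by
  have h := sum_measureReal_preimage_singleton (μ := μ) ({a} ×ˢ Finset.univ)
    fun s _ ↦ hXY (measurableSet_singleton s)
  rw [Finset.sum_product, Finset.sum_singleton] at h
  rw [h]
  congr 1
  ext ω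
  simp [eq_comm]

lemma integral_comp_eq_sum_measureReal_preimage_mul [IsFiniteMeasure μ]
    [Fintype S] [MeasurableSpace S] [DiscreteMeasurableSpace S] {X : Ω → S}
    (hX : Measurable X) (g : S → ℝ) :
    ∫ ω, g (X ω) ∂μ = ∑ s, μ.real (X ⁻¹' {s}) * g s := by
  rw [← integral_map hX.aemeasurable (measurable_of_countable g).aestronglyMeasurable,
    integral_fintype .of_finite]
  simp only [map_measureReal_apply hX (measurableSet_singleton _), smul_eq_mul]

theorem entropy_prod_le_entropy_add_integral_neg_log [IsProbabilityMeasure μ]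
    [Fintype S] [MeasurableSpace S] [DiscreteMeasurableSpace S]
    [Fintype T] [MeasurableSpace T] [DiscreteMeasurableSpace T]
    {X : Ω → S} {Y : Ω → T} (hX : Measurable X) (hY : Measurable Y)
    {q : S → T → ℝ} (hq_pos : ∀ a b, 0 < q a b) (hq_sum : ∀ a, ∑ b, q a b = 1) :
    entropy μ (fun ω ↦ (X ω, Y ω)) ≤ entropy μ X + ∫ ω, -log (q (X ω) (Y ω)) ∂μ := by
  have hXY : Measurable fun ω ↦ (X ω, Y ω) := hX.prodMk hY
  set p : S × T → ℝ := fun s ↦ μ.real ((fun ω ↦ (X ω, Y ω)) ⁻¹' {s})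
  set pX : S → ℝ := fun a ↦ μ.real (X ⁻¹' {a})
  have hmarg : ∀ a, pX a = ∑ b, p (a, b) := measureReal_preimage_singleton_eq_sum_prod hXY
  have hentropyX : entropy μ X = -∑ s, p s * log (pX s.1) := by
    simp only [entropy, negMulLog, neg_mul, Finset.sum_neg_distrib, Fintype.sum_prod_type,
      ← Finset.sum_mul, ← hmarg]
    rfl
  have hintegral : ∫ ω, -log (q (X ω) (Y ω)) ∂μ = -∑ s, p s * log (q s.1 s.2) := by
    rw [integral_comp_eq_sum_measureReal_preimage_mul hXY (fun s ↦ -log (q s.1 s.2))]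
    simp only [mul_neg, Finset.sum_neg_distrib]
    rfl
  have hgibbs : ∑ s, (negMulLog (p s) + p s * (log (pX s.1) + log (q s.1 s.2)))
      ≤ ∑ s, (pX s.1 * q s.1 s.2 - p s) :=
    Finset.sum_le_sum fun s _ ↦ negMulLog_add_mul_log_add_log_le measureReal_nonneg
      (hmarg s.1 ▸ Finset.single_le_sum (f := fun b ↦ p (s.1, b))
        (fun _ _ ↦ measureReal_nonneg) (Finset.mem_univ s.2))
      (hq_pos s.1 s.2)
  have hr_sum : ∑ s : S × T, pX s.1 * q s.1 s.2 = 1 := by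
    simp only [Fintype.sum_prod_type, ← Finset.mul_sum, hq_sum, mul_one]
    exact sum_measureReal_preimage_singleton_eq_one hX
  have hp_sum : ∑ s, p s = 1 := sum_measureReal_preimage_singleton_eq_one hXY
  simp only [Finset.sum_add_distrib, Finset.sum_sub_distrib, mul_add, hr_sum, hp_sum] at hgibbs
  have hentropyXY : entropy μ (fun ω ↦ (X ω, Y ω)) = ∑ s, negMulLog (p s) := rfl
  rw [hentropyXY, hentropyX, hintegral]
  linarith

end FiniteRandomVariable

theorem condEntropy_le_crossEntropy_and_neg_mutualInfo_le_general
    {Ω : Type*} [MeasurableSpace Ω]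
    (μ : Measure Ω) [IsProbabilityMeasure μ]
    {α β : Type*}
    [Fintype α] [MeasurableSpace α] [DiscreteMeasurableSpace α]
    [Fintype β] [MeasurableSpace β] [DiscreteMeasurableSpace β]
    (X : Ω → α) (Y : Ω → β) (hX : Measurable X) (hY : Measurable Y)
    (q : α → β → ℝ) (hq_pos : ∀ a b, 0 < q a b) (hq_sum : ∀ a, ∑ b : β, q a b = 1) :
    condEntropy μ X Y ≤ ∫ ω, -Real.log (q (X ω) (Y ω)) ∂μ ∧
      -mutualInfo μ X Y ≤ ∫ ω, -Real.log (q (X ω) (Y ω)) ∂μ := by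
  have h := entropy_prod_le_entropy_add_integral_neg_log (μ := μ) hX hY hq_pos hq_sum
  have hY_nonneg := entropy_nonneg (μ := μ) Y
  constructor
  · rw [condEntropy]
    linarith
  · rw [mutualInfo]
    linarith

/-- Variational upper bound (paper's Eq. 9): for any variational conditional distribution
`q` (with `q a b > 0` and `∑ b, q a b = 1`), the conditional entropy `H[Y|X]` — and hence
`-I[X : Y]` — is bounded above by the expected cross-entropy `𝔼[-log q (X ω) (Y ω)]`. -/
theorem condEntropy_le_crossEntropy_and_neg_mutualInfo_le
    {Ω : Type*} [MeasurableSpace Ω]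
    (μ : Measure Ω) [IsProbabilityMeasure μ]
    {α β : Type*}
    [Fintype α] [Nonempty α] [MeasurableSpace α] [DiscreteMeasurableSpace α]
    [Fintype β] [Nonempty β] [MeasurableSpace β] [DiscreteMeasurableSpace β]
    (X : Ω → α) (Y : Ω → β) (hX : Measurable X) (hY : Measurable Y)
    (q : α → β → ℝ) (hq_pos : ∀ a b, 0 < q a b) (hq_sum : ∀ a, ∑ b : β, q a b = 1) :
    condEntropy μ X Y ≤ ∫ ω, -Real.log (q (X ω) (Y ω)) ∂μ ∧
      -mutualInfo μ X Y ≤ ∫ ω, -Real.log (q (X ω) (Y ω)) ∂μ :=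
  condEntropy_le_crossEntropy_and_neg_mutualInfo_le_general μ X Y hX hY q hq_pos hq_sum
end

section
/- Let μ be a probability measure on a standard Borel space α, let κ be a Markov kernel from α to a standard Borel space β, and let ν be any probability measure on β. Then klDiv(μ ⊗ₘ κ, μ ×ₘ (μ.bind κ)) ≤ ∫ klDiv(κ a, ν) dμ(a). (Variational upper bound on mutual information used to derive Eq. 10 of the paper: the mutual information between the input and the stochastic representation, i.e., the KL divergence of the joint law from the product of its marginals, is bounded by the expected KL divergence of the conditional law to any fixed prior ν.) -/
open MeasureTheory ProbabilityTheory Real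
open scoped ENNReal NNReal Classical

/-- Kullback–Leibler divergence: `∫ log (dμ/dν) dμ` when `μ ≪ ν` and the log-likelihood
ratio is `μ`-integrable, and `+∞` otherwise. -/

noncomputable def klDiv {α : Type*} [MeasurableSpace α] (μ ν : Measure α) : ℝ≥0∞ :=
  if μ ≪ ν ∧ Integrable (llr μ ν) μ then ENNReal.ofReal (∫ x, llr μ ν x ∂μ) else ⊤

/-!
Write `P = μ ⊗ₘ κ` for the joint law and `m = κ ∘ₘ μ` for its second marginal. Disintegrating `P`
along `β` instead of `α` (through the posterior `κ†μ`) and applying the chain rule for the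
Kullback–Leibler divergence gives the decomposition `KL(P ‖ μ × ν) = KL(m ‖ ν) + KL(P ‖ μ × m)`,
so the mutual information `KL(P ‖ μ × m)` is at most `KL(P ‖ μ × ν)`. Since
`∂P/∂(μ × ν) (a, b) = ∂(κ a)/∂ν (b)`, the latter is the conditional divergence `∫ KL(κ a ‖ ν) dμ`.
-/

namespace ProbabilityTheory

variable {α β : Type*} {mα : MeasurableSpace α} {mβ : MeasurableSpace β}
  [MeasurableSpace.CountableOrCountablyGenerated α β]

lemma rnDeriv_measure_compProd_right (μ : Measure α) (κ η : Kernel α β)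
    [IsFiniteMeasure μ] [IsFiniteKernel κ] [IsFiniteKernel η] :
    (μ ⊗ₘ κ).rnDeriv (μ ⊗ₘ η) =ᵐ[μ ⊗ₘ η] fun p ↦ κ.rnDeriv η p.1 p.2 := by
  have h_singular : (μ ⊗ₘ κ.singularPart η).rnDeriv (μ ⊗ₘ η) =ᵐ[μ ⊗ₘ η] 0 :=
    Measure.rnDeriv_eq_zero_of_mutuallySingular
      (Measure.MutuallySingular.compProd_of_right μ μ
        (.of_forall (Kernel.mutuallySingular_singularPart κ η)))
      Measure.AbsolutelyContinuous.rfl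
  have h_density : (μ ⊗ₘ η.withDensity (κ.rnDeriv η)).rnDeriv (μ ⊗ₘ η)
      =ᵐ[μ ⊗ₘ η] fun p ↦ κ.rnDeriv η p.1 p.2 := by
    rw [Measure.compProd_withDensity (Kernel.measurable_rnDeriv κ η)]
    exact Measure.rnDeriv_withDensity _ (Kernel.measurable_rnDeriv κ η)
  conv_lhs => rw [← Kernel.rnDeriv_add_singularPart κ η, Measure.compProd_add_right]
  filter_upwards [Measure.rnDeriv_add' (μ ⊗ₘ η.withDensity (κ.rnDeriv η))
      (μ ⊗ₘ κ.singularPart η) (μ ⊗ₘ η), h_singular, h_density]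
    with p h_add h_zero h_wd
  rw [h_add, Pi.add_apply, h_zero, h_wd, Pi.zero_apply, add_zero]

end ProbabilityTheory

namespace InformationTheory

variable {α β : Type*} {mα : MeasurableSpace α} {mβ : MeasurableSpace β}

lemma klDiv_map_measurableEquiv (e : α ≃ᵐ β) (μ ν : Measure α)
    [IsFiniteMeasure μ] [IsFiniteMeasure ν] :
    klDiv (μ.map e) (ν.map e) = klDiv μ ν := by
  refine le_antisymm (klDiv_map_le μ ν e.measurable) ?_
  calc klDiv μ ν = klDiv ((μ.map e).map e.symm) ((ν.map e).map e.symm) := by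
        simp_rw [MeasurableEquiv.map_symm_map]
    _ ≤ klDiv (μ.map e) (ν.map e) := klDiv_map_le _ _ e.symm.measurable

section CountablyGenerated

variable [MeasurableSpace.CountableOrCountablyGenerated α β]

lemma klDiv_compProd_right (μ : Measure α) (κ η : Kernel α β)
    [IsFiniteMeasure μ] [IsFiniteKernel κ] [IsFiniteKernel η] :
    klDiv (μ ⊗ₘ κ) (μ ⊗ₘ η) = ∫⁻ a, klDiv (κ a) (η a) ∂μ := by
  by_cases h_ac : ∀ᵐ a ∂μ, κ a ≪ η a
  · rw [klDiv_eq_lintegral_klFun_of_ac (Measure.AbsolutelyContinuous.compProd_right h_ac)]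
    calc ∫⁻ p, ENNReal.ofReal (klFun ((μ ⊗ₘ κ).rnDeriv (μ ⊗ₘ η) p).toReal) ∂(μ ⊗ₘ η)
        = ∫⁻ p, ENNReal.ofReal (klFun (κ.rnDeriv η p.1 p.2).toReal) ∂(μ ⊗ₘ η) := by
          refine lintegral_congr_ae ?_
          filter_upwards [rnDeriv_measure_compProd_right μ κ η] with p hp
          rw [hp]
      _ = ∫⁻ a, ∫⁻ b, ENNReal.ofReal (klFun (κ.rnDeriv η a b).toReal) ∂(η a) ∂μ :=
          Measure.lintegral_compProd (by fun_prop)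
      _ = ∫⁻ a, klDiv (κ a) (η a) ∂μ := by
          refine lintegral_congr_ae ?_
          filter_upwards [h_ac] with a ha
          rw [klDiv_eq_lintegral_klFun_of_ac ha]
          refine lintegral_congr_ae ?_
          filter_upwards [Kernel.rnDeriv_eq_rnDeriv_measure (κ := κ) (η := η) (a := a)] with b hb
          rw [hb]
  · rw [klDiv_of_not_ac (mt Measure.absolutelyContinuous_compProd_right_iff.mp h_ac)]
    set s := {a | κ a ≪ η a}ᶜ
    have hs : MeasurableSet s := (Kernel.measurableSet_absolutelyContinuous κ η).compl
    have hμs : μ s ≠ 0 := by rwa [Filter.Eventually, mem_ae_iff] at h_ac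
    refine (eq_top_iff.mpr ?_).symm
    calc ∞ = ∫⁻ _ in s, ∞ ∂μ := by rw [setLIntegral_const, ENNReal.top_mul hμs]
      _ = ∫⁻ a in s, klDiv (κ a) (η a) ∂μ :=
          setLIntegral_congr_fun hs fun a ha ↦ (klDiv_of_not_ac ha).symm
      _ ≤ ∫⁻ a, klDiv (κ a) (η a) ∂μ := setLIntegral_le_lintegral _ _

end CountablyGenerated

section StandardBorel

variable [StandardBorelSpace α]

lemma klDiv_compProd_prod_eq_add (μ : Measure α) [IsProbabilityMeasure μ] (κ : Kernel α β)
    [IsMarkovKernel κ] (ν : Measure β) [IsFiniteMeasure ν] :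
    klDiv (μ ⊗ₘ κ) (μ.prod ν) = klDiv (κ ∘ₘ μ) ν + klDiv (μ ⊗ₘ κ) (μ.prod (κ ∘ₘ μ)) := by
  have : Nonempty α := nonempty_of_isProbabilityMeasure μ
  rw [← klDiv_map_measurableEquiv MeasurableEquiv.prodComm (μ ⊗ₘ κ) (μ.prod ν),
    ← klDiv_map_measurableEquiv MeasurableEquiv.prodComm (μ ⊗ₘ κ) (μ.prod (κ ∘ₘ μ))]
  have h_joint : (μ ⊗ₘ κ).map MeasurableEquiv.prodComm = (κ ∘ₘ μ) ⊗ₘ κ†μ :=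
    compProd_posterior_eq_map_swap.symm
  have h_prod (ρ : Measure β) [IsFiniteMeasure ρ] :
      (μ.prod ρ).map MeasurableEquiv.prodComm = ρ ⊗ₘ Kernel.const β μ := by
    rw [Measure.compProd_const]
    exact Measure.prod_swap
  rw [h_joint, h_prod, h_prod]
  exact klDiv_compProd_eq_add _ _ _ _

end StandardBorel

end InformationTheory

-- Mathlib's divergence carries the extra term `ν.real univ - μ.real univ`.
lemma klDiv_eq_informationTheory_klDiv {α : Type*} [MeasurableSpace α] {μ ν : Measure α}
    (h : μ Set.univ = ν Set.univ) : klDiv μ ν = InformationTheory.klDiv μ ν := by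
  rw [klDiv, InformationTheory.klDiv_def, measureReal_def, measureReal_def, h,
    add_sub_cancel_right]

/-- Variational upper bound on mutual information: the KL divergence of the joint law
`μ ⊗ₘ κ` from the product of its marginals `μ ×ₘ (μ.bind κ)` is bounded by the expected
KL divergence of the conditional law `κ a` to any fixed prior `ν`. -/
theorem mutualInfo_le_integral_klDiv
    {α β : Type*} [MeasurableSpace α] [StandardBorelSpace α]
    [MeasurableSpace β] [StandardBorelSpace β]
    (μ : Measure α) [IsProbabilityMeasure μ] (κ : Kernel α β) [IsMarkovKernel κ]
    (ν : Measure β) [IsProbabilityMeasure ν] :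
    klDiv (μ ⊗ₘ κ) (μ.prod (μ.bind fun a => κ a)) ≤ ∫⁻ a, klDiv (κ a) ν ∂μ := by
  calc klDiv (μ ⊗ₘ κ) (μ.prod (κ ∘ₘ μ))
      = InformationTheory.klDiv (μ ⊗ₘ κ) (μ.prod (κ ∘ₘ μ)) :=
        klDiv_eq_informationTheory_klDiv (by simp)
    _ ≤ InformationTheory.klDiv (μ ⊗ₘ κ) (μ ⊗ₘ Kernel.const α ν) := by
        rw [Measure.compProd_const, InformationTheory.klDiv_compProd_prod_eq_add μ κ ν]
        exact le_add_self
    _ = ∫⁻ a, InformationTheory.klDiv (κ a) ν ∂μ :=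
        InformationTheory.klDiv_compProd_right μ κ (Kernel.const α ν)
    _ = ∫⁻ a, klDiv (κ a) ν ∂μ := by
        simp_rw [klDiv_eq_informationTheory_klDiv (by simp : κ _ Set.univ = ν Set.univ)]
end

section
/- Let m ≥ 1, μ_h ∈ ℝ, σ_h > 0, and let λ : Fin m → ℝ take values in {0, 1} and h : Fin m → ℝ. Set A = ∑_j (1 − λ_j)², B = (∑_j λ_j (h_j − μ_h)) / σ_h, and μ_Z = (1/m)(∑_j λ_j h_j + (∑_j (1 − λ_j)) μ_h), and assume A > 0. Then klDiv(gaussianReal μ_Z (σ_h² A / m²), gaussianReal μ_h (σ_h² / m)) = −(1/2) log A + A/(2m) + B²/(2m) + (1/2) log m − 1/2. (The core computation of the paper's Proposition 1: the per-graph KL term equals −½ log A_G + A_G/(2m_G) + B_G²/(2m_G) up to the constant ½ log m − ½.) -/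
open MeasureTheory ProbabilityTheory Real
open scoped ENNReal NNReal Classical

/-! Both measures are Gaussian, so their log-likelihood ratio is a quadratic polynomial whose
expectation only involves the mean and variance of the first one:
`KL(𝒩(μ₁, v₁) ‖ 𝒩(μ₂, v₂)) = (log (v₂ / v₁) + (v₁ + (μ₁ - μ₂)²) / v₂ - 1) / 2`.
For the mean readout `v₁ = σh² A / m²`, `v₂ = σh² / m` and `μZ - μh = σh B / m`. -/

namespace ProbabilityTheory

lemma log_gaussianPDFReal (μ : ℝ) {v : ℝ≥0} (hv : v ≠ 0) (x : ℝ) :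
    log (gaussianPDFReal μ v x) = -(log (2 * π) + log v) / 2 - (x - μ) ^ 2 / (2 * v) := by
  rw [gaussianPDFReal, log_mul (by positivity) (exp_ne_zero _), log_inv, log_exp,
    log_sqrt (by positivity), log_mul (by positivity) (by positivity)]
  ring

lemma llr_gaussianReal (μ₁ μ₂ : ℝ) {v₁ v₂ : ℝ≥0} (hv₁ : v₁ ≠ 0) (hv₂ : v₂ ≠ 0) :
    llr (gaussianReal μ₁ v₁) (gaussianReal μ₂ v₂) =ᵐ[gaussianReal μ₁ v₁]
      fun x ↦ log (v₂ / v₁) / 2 + (x - μ₂) ^ 2 / (2 * v₂) - (x - μ₁) ^ 2 / (2 * v₁) := by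
  have hac₁ := gaussianReal_absolutelyContinuous μ₁ hv₁
  have hac₂ := gaussianReal_absolutelyContinuous μ₂ hv₂
  have hrn := Measure.rnDeriv_eq_div hac₁ hac₂
  filter_upwards [(hac₁.trans (gaussianReal_absolutelyContinuous' μ₂ hv₂)).ae_le hrn,
    hac₁.ae_le (rnDeriv_gaussianReal μ₁ v₁), hac₁.ae_le (rnDeriv_gaussianReal μ₂ v₂)]
    with x hx hx₁ hx₂
  have hp₁ := gaussianPDFReal_pos μ₁ v₁ x hv₁
  have hp₂ := gaussianPDFReal_pos μ₂ v₂ x hv₂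
  rw [llr, hx, hx₁, hx₂, gaussianPDF, gaussianPDF, ENNReal.toReal_div,
    ENNReal.toReal_ofReal hp₁.le, ENNReal.toReal_ofReal hp₂.le, log_div hp₁.ne' hp₂.ne',
    log_gaussianPDFReal μ₁ hv₁, log_gaussianPDFReal μ₂ hv₂,
    log_div (by positivity) (by positivity)]
  ring

lemma integrable_sq_sub_gaussianReal (μ : ℝ) (v : ℝ≥0) (c : ℝ) :
    Integrable (fun x ↦ (x - c) ^ 2) (gaussianReal μ v) :=
  ((memLp_id_gaussianReal 2).sub (memLp_const c)).integrable_sq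

lemma integral_sq_sub_gaussianReal (μ : ℝ) (v : ℝ≥0) (c : ℝ) :
    ∫ x, (x - c) ^ 2 ∂gaussianReal μ v = v + (μ - c) ^ 2 := by
  have hvar := variance_eq_sub (memLp_id_gaussianReal (μ := μ - c) (v := v) 2)
  simp only [variance_id_gaussianReal, Pi.pow_apply, id_eq, integral_id_gaussianReal] at hvar
  rw [← integral_map (by fun_prop) (by fun_prop) (f := fun x ↦ x ^ 2), gaussianReal_map_sub_const]
  linarith

lemma klDiv_gaussianReal (μ₁ μ₂ : ℝ) {v₁ v₂ : ℝ≥0} (hv₁ : v₁ ≠ 0) (hv₂ : v₂ ≠ 0) :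
    klDiv (gaussianReal μ₁ v₁) (gaussianReal μ₂ v₂) =
      ENNReal.ofReal ((log (v₂ / v₁) + (v₁ + (μ₁ - μ₂) ^ 2) / v₂ - 1) / 2) := by
  have hllr := llr_gaussianReal μ₁ μ₂ hv₁ hv₂
  have hint₁ := integrable_sq_sub_gaussianReal μ₁ v₁ μ₁
  have hint₂ := integrable_sq_sub_gaussianReal μ₁ v₁ μ₂
  have hint : Integrable (llr (gaussianReal μ₁ v₁) (gaussianReal μ₂ v₂)) (gaussianReal μ₁ v₁) :=
    (((integrable_const _).add (hint₂.div_const _)).sub (hint₁.div_const _)).congr hllr.symm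
  have hac : gaussianReal μ₁ v₁ ≪ gaussianReal μ₂ v₂ :=
    (gaussianReal_absolutelyContinuous μ₁ hv₁).trans (gaussianReal_absolutelyContinuous' μ₂ hv₂)
  rw [klDiv, if_pos ⟨hac, hint⟩, integral_congr_ae hllr,
    integral_sub (f := fun x ↦ log (v₂ / v₁ : ℝ) / 2 + (x - μ₂) ^ 2 / (2 * v₂))
      ((integrable_const _).add (hint₂.div_const _)) (hint₁.div_const _),
    integral_add (integrable_const _) (hint₂.div_const _)]
  simp only [integral_div, integral_sq_sub_gaussianReal, integral_const, probReal_univ,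
    smul_eq_mul, one_mul, sub_self]
  have hv₁' : (v₁ : ℝ) ≠ 0 := mod_cast hv₁
  have hv₂' : (v₂ : ℝ) ≠ 0 := mod_cast hv₂
  congr 1
  field_simp
  ring

end ProbabilityTheory

lemma masked_mean_sub_eq {ι : Type*} [Fintype ι] (hι : (Fintype.card ι : ℝ) ≠ 0)
    (lam h : ι → ℝ) (c : ℝ) :
    (1 / (Fintype.card ι : ℝ)) * (∑ j, lam j * h j + (∑ j, (1 - lam j)) * c) - c =
      (∑ j, lam j * (h j - c)) / Fintype.card ι := by
  simp only [Finset.sum_sub_distrib, mul_sub, Finset.sum_const, Finset.card_univ, nsmul_eq_mul,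
    mul_one, ← Finset.sum_mul]
  field_simp
  ring

theorem klDiv_mean_readout_general
    (m : ℕ) (hm : 1 ≤ m) (μh σh : ℝ) (hσ : 0 < σh)
    (lam : Fin m → ℝ) (h : Fin m → ℝ)
    (A B μZ : ℝ)
    (hApos : 0 < A)
    (hB : B = (∑ j, lam j * (h j - μh)) / σh)
    (hμZ : μZ = (1 / (m : ℝ)) * (∑ j, lam j * h j + (∑ j, (1 - lam j)) * μh)) :
    klDiv (gaussianReal μZ (σh ^ 2 * A / (m : ℝ) ^ 2).toNNReal)
        (gaussianReal μh (σh ^ 2 / (m : ℝ)).toNNReal) =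
      ENNReal.ofReal (-(1 / 2) * Real.log A + A / (2 * m) + B ^ 2 / (2 * m)
        + (1 / 2) * Real.log m - 1 / 2) := by
  have hm₀ : (0 : ℝ) < m := by exact_mod_cast hm
  have hv₁ : 0 < σh ^ 2 * A / (m : ℝ) ^ 2 := by positivity
  have hv₂ : 0 < σh ^ 2 / (m : ℝ) := by positivity
  have hmean : μZ - μh = σh * B / m := by
    rw [hμZ, hB, mul_div_cancel₀ _ hσ.ne']
    simpa using masked_mean_sub_eq (by simpa using hm₀.ne') lam h μh
  have hratio : σh ^ 2 / m / (σh ^ 2 * A / m ^ 2) = m / A := by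
    field_simp
  rw [klDiv_gaussianReal _ _ (Real.toNNReal_pos.2 hv₁).ne' (Real.toNNReal_pos.2 hv₂).ne',
    Real.coe_toNNReal _ hv₁.le, Real.coe_toNNReal _ hv₂.le, hmean, hratio,
    log_div hm₀.ne' hApos.ne']
  congr 1
  field_simp
  ring

/-- The core computation of the paper's Proposition 1 (mean readout): the per-graph KL term
`KL(N(μZ, σh² A / m²), N(μh, σh² / m))` equals
`-½ log A + A/(2m) + B²/(2m) + ½ log m - ½`. -/
theorem klDiv_mean_readout
    (m : ℕ) (hm : 1 ≤ m) (μh σh : ℝ) (hσ : 0 < σh)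
    (lam : Fin m → ℝ) (hlam : ∀ j, lam j = 0 ∨ lam j = 1) (h : Fin m → ℝ)
    (A B μZ : ℝ)
    (hA : A = ∑ j, (1 - lam j) ^ 2) (hApos : 0 < A)
    (hB : B = (∑ j, lam j * (h j - μh)) / σh)
    (hμZ : μZ = (1 / (m : ℝ)) * (∑ j, lam j * h j + (∑ j, (1 - lam j)) * μh)) :
    klDiv (gaussianReal μZ (σh ^ 2 * A / (m : ℝ) ^ 2).toNNReal)
        (gaussianReal μh (σh ^ 2 / (m : ℝ)).toNNReal) =
      ENNReal.ofReal (-(1 / 2) * Real.log A + A / (2 * m) + B ^ 2 / (2 * m)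
        + (1 / 2) * Real.log m - 1 / 2) :=
  klDiv_mean_readout_general m hm μh σh hσ lam h A B μZ hApos hB hμZ
end
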